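/- (Integrality gap for bounded 2-dimAP+.) For every integer s ≥ 2, with n = s² and k = n − 2, there exist: a finite set V with |V| = n; a set T ⊆ V with |T| = k; a bijection f₀ from T onto {0,…,s−1}² \ {(0,0), (s−1,s−1)}; a symmetric weight function w : V × V → ℝ≥0; and a metric dist on V with dist(x,y) = ‖f₀(x) − f₀(y)‖₂ for all x,y ∈ T and satisfying the 2-dimensional spreading constraints, such that ∑_{{u,v}} w(u,v)·dist(u,v) = 1, while every injective map f : V → {0,…,s−1}² with f(t) = f₀(t) for all t ∈ T satisfies ∑_{{u,v}} w(u,v)·‖f(u) − f(v)‖₂ = √2·(s−1). In particular, the integrality gap of the spreading LP for bounded 2-dimAP+ is Ω(√k). -/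

import Mathlib

open scoped BigOperators

/-- Euclidean distance between two points of the integer lattice `ℤ²`. -/
noncomputable def eDist2 (p q : ℤ × ℤ) : ℝ :=
  Real.sqrt (((p.1 : ℝ) - (q.1 : ℝ)) ^ 2 + ((p.2 : ℝ) - (q.2 : ℝ)) ^ 2)

/-- `dist` is a metric on `V`. -/
def IsMetric {V : Type*} (dist : V → V → ℝ) : Prop :=
  (∀ x, dist x x = 0) ∧ (∀ x y, 0 ≤ dist x y) ∧ (∀ x y, dist x y = dist y x) ∧
  (∀ x y z, dist x z ≤ dist x y + dist y z) ∧ (∀ x y, dist x y = 0 → x = y)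

/-- The grid `{0,…,s-1}²` with the two corners `(0,0)` and `(s-1,s-1)` removed. -/
def cornerFreeGrid (s : ℕ) : Set (ℤ × ℤ) :=
  {p | (0 ≤ p.1 ∧ p.1 < (s : ℤ) ∧ 0 ≤ p.2 ∧ p.2 < (s : ℤ)) ∧
    p ≠ (0, 0) ∧ p ≠ ((s : ℤ) - 1, (s : ℤ) - 1)}

/-- An integrality-gap instance for bounded 2-dimAP+ on the vertex set `V`:
`|V| = n = s²`, `k = n - 2` terminals placed bijectively on the corner-free grid, a
feasible spreading-LP solution of cost `1`, while every feasible integral layout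
(an injective extension of `f₀` into the grid `{0,…,s-1}²`) has cost `√2 · (s-1)`. -/
def BoundedGapInstance (s : ℕ) (V : Type) [Fintype V] [DecidableEq V] : Prop :=
  Fintype.card V = s ^ 2 ∧
  ∃ (T : Finset V) (f₀ : {x // x ∈ T} → ℤ × ℤ) (w : V → V → ℝ) (dist : V → V → ℝ),
    T.card = s ^ 2 - 2 ∧
    Function.Injective f₀ ∧
    (∀ x, f₀ x ∈ cornerFreeGrid s) ∧
    (∀ p ∈ cornerFreeGrid s, ∃ x, f₀ x = p) ∧
    (∀ u v, w u v = w v u) ∧ (∀ u v, 0 ≤ w u v) ∧ (∀ v, w v v = 0) ∧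
    IsMetric dist ∧
    (∀ x y : {x // x ∈ T}, dist x.1 y.1 = eDist2 (f₀ x) (f₀ y)) ∧
    (∀ S : Finset V, ∀ u ∈ S,
      ((S.card : ℝ) - 1) ^ ((3 : ℝ) / 2) / 4 ≤ ∑ v ∈ S, dist u v) ∧
    (∑ u, ∑ v, w u v * dist u v) / 2 = 1 ∧
    (∀ f : V → ℤ × ℤ, Function.Injective f →
      (∀ v, 0 ≤ (f v).1 ∧ (f v).1 < (s : ℤ) ∧ 0 ≤ (f v).2 ∧ (f v).2 < (s : ℤ)) →
      (∀ t (ht : t ∈ T), f t = f₀ ⟨t, ht⟩) →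
      (∑ u, ∑ v, w u v * eDist2 (f u) (f v)) / 2 = Real.sqrt 2 * ((s : ℝ) - 1))


open Finset Function

/-!
Take the grid cells as vertices, all cells but the corners `a = (0,0)` and `b = (s-1,s-1)` as
terminals, and a single edge `ab` of weight `1`. The LP metric is the Euclidean distance of the
placement that keeps every other cell in place and moves `a` just outside the grid, next to `b`, so
the LP cost is `1`. Any injective placement into `ℤ²` satisfies the spreading constraints: at most
`(2r+1)²` lattice points lie within Chebyshev distance `r` of a point, so summing over the radii
`r < R ≈ √m / 2` shows that `m + 1` lattice points have total distance `≳ m^{3/2}/3` from any one of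
them. An integral layout, on the other hand, must put `a` and `b` on the two free corners, at
distance `√2 (s-1)`.
-/

section LatticeDistance

lemma isMetric_dist_comp {V X : Type*} [MetricSpace X] {g : V → X} (hg : Injective g) :
    IsMetric fun u v => dist (g u) (g v) :=
  ⟨fun _ => dist_self _, fun _ _ => dist_nonneg, fun _ _ => dist_comm _ _,
    fun _ _ _ => dist_triangle _ _ _, fun _ _ h => hg (dist_eq_zero.mp h)⟩

def latticeToComplex (p : ℤ × ℤ) : ℂ := ⟨p.1, p.2⟩

lemma latticeToComplex_injective : Injective latticeToComplex := by
  intro p q h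
  have h1 := congrArg Complex.re h
  have h2 := congrArg Complex.im h
  simp only [latticeToComplex, Int.cast_inj] at h1 h2
  exact Prod.ext h1 h2

lemma eDist2_eq_dist (p q : ℤ × ℤ) :
    eDist2 p q = dist (latticeToComplex p) (latticeToComplex q) := by
  rw [Complex.dist_eq_re_im]; rfl

lemma eDist2_comm (p q : ℤ × ℤ) : eDist2 p q = eDist2 q p := by
  simp only [eDist2_eq_dist, dist_comm]

lemma isMetric_eDist2_comp {V : Type*} {g : V → ℤ × ℤ} (hg : Injective g) :
    IsMetric fun u v => eDist2 (g u) (g v) := by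
  simp only [eDist2_eq_dist]
  exact isMetric_dist_comp (g := latticeToComplex ∘ g) (latticeToComplex_injective.comp hg)

end LatticeDistance

section Spreading

def chebDist (p q : ℤ × ℤ) : ℕ := max (p.1 - q.1).natAbs (p.2 - q.2).natAbs

lemma chebDist_le_eDist2 (p q : ℤ × ℤ) : (chebDist p q : ℝ) ≤ eDist2 p q := by
  rw [eDist2_eq_dist, dist_eq_norm, chebDist, Nat.cast_max]
  have h1 := Complex.abs_re_le_norm (latticeToComplex p - latticeToComplex q)
  have h2 := Complex.abs_im_le_norm (latticeToComplex p - latticeToComplex q)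
  simp only [Complex.sub_re, Complex.sub_im, latticeToComplex] at h1 h2
  push_cast [Nat.cast_natAbs]
  exact max_le h1 h2

lemma card_filter_chebDist_le (S : Finset (ℤ × ℤ)) (p : ℤ × ℤ) (r : ℕ) :
    #{q ∈ S | chebDist p q ≤ r} ≤ (2 * r + 1) ^ 2 := by
  have hbox : {q ∈ S | chebDist p q ≤ r} ⊆
      Icc (p.1 - r) (p.1 + r) ×ˢ Icc (p.2 - r) (p.2 + r) := by
    intro q hq
    simp only [mem_filter, chebDist, max_le_iff] at hq
    simp only [mem_product, mem_Icc]
    omega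
  calc #{q ∈ S | chebDist p q ≤ r}
      ≤ #(Icc (p.1 - r) (p.1 + r) ×ˢ Icc (p.2 - r) (p.2 + r)) := card_le_card hbox
    _ = (2 * r + 1) ^ 2 := by
      rw [card_product, Int.card_Icc, Int.card_Icc, sq]
      congr 1 <;> omega

lemma card_sub_sq_le_card_filter_lt_chebDist (S : Finset (ℤ × ℤ)) (p : ℤ × ℤ) (r : ℕ) :
    (#S : ℝ) - (2 * r + 1) ^ 2 ≤ #{q ∈ S | r < chebDist p q} := by
  have hsplit := card_filter_add_card_filter_not (s := S) (fun q => chebDist p q ≤ r)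
  simp only [not_le] at hsplit
  have hball : (#{q ∈ S | chebDist p q ≤ r} : ℝ) ≤ (2 * r + 1) ^ 2 := by
    exact_mod_cast card_filter_chebDist_le S p r
  rw [← hsplit]
  push_cast
  linarith

lemma sum_range_card_filter_lt_le_sum {α : Type*} (S : Finset α) (f : α → ℕ) (R : ℕ) :
    ∑ r ∈ range R, #{x ∈ S | r < f x} ≤ ∑ x ∈ S, f x := by
  simp_rw [card_filter]
  rw [sum_comm]
  gcongr with x
  rw [← card_filter]
  calc #{r ∈ range R | r < f x} ≤ #(range (f x)) :=
        card_le_card fun r hr => mem_range.mpr (mem_filter.mp hr).2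
    _ = f x := card_range _

lemma sum_range_odd_sq (R : ℕ) :
    ∑ r ∈ range R, (2 * (r : ℝ) + 1) ^ 2 = (4 * (R : ℝ) ^ 3 - R) / 3 := by
  induction R with
  | zero => simp
  | succ n ih => rw [sum_range_succ, ih]; push_cast; ring

lemma mul_card_sub_le_sum_chebDist (S : Finset (ℤ × ℤ)) (p : ℤ × ℤ) (R : ℕ) :
    R * (#S : ℝ) - (4 * R ^ 3 - R) / 3 ≤ ∑ q ∈ S, (chebDist p q : ℝ) :=
  calc R * (#S : ℝ) - (4 * R ^ 3 - R) / 3 = ∑ r ∈ range R, ((#S : ℝ) - (2 * r + 1) ^ 2) := by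
        rw [sum_sub_distrib, sum_range_odd_sq, sum_const, card_range, nsmul_eq_mul]
    _ ≤ ∑ r ∈ range R, (#{q ∈ S | r < chebDist p q} : ℝ) :=
        sum_le_sum fun r _ => card_sub_sq_le_card_filter_lt_chebDist S p r
    _ ≤ ∑ q ∈ S, (chebDist p q : ℝ) := by
        exact_mod_cast sum_range_card_filter_lt_le_sum S (chebDist p) R

lemma exists_rpow_three_halves_div_four_le (m : ℝ) (hm : 0 ≤ m) :
    ∃ R : ℕ, m ^ ((3 : ℝ) / 2) / 4 ≤ R * (m + 1) - (4 * R ^ 3 - R) / 3 := by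
  set y := √m
  have hy : 0 ≤ y := Real.sqrt_nonneg m
  have hym : y ^ 2 = m := Real.sq_sqrt hm
  rw [Real.rpow_div_two_eq_sqrt _ hm,
    show y ^ (3 : ℝ) = y ^ 3 by exact_mod_cast Real.rpow_natCast y 3]
  rcases le_or_gt y 4 with hy4 | hy4
  · refine ⟨1, ?_⟩
    push_cast
    nlinarith [mul_nonneg (sq_nonneg y) (sub_nonneg.mpr hy4)]
  · -- `R ≈ y / 2` maximises `R * y ^ 2 - 4 * R ^ 3 / 3`, with value `y ^ 3 / 3`.
    refine ⟨⌊(y + 1) / 2⌋₊, ?_⟩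
    set R : ℝ := ((⌊(y + 1) / 2⌋₊ : ℕ) : ℝ)
    have hR1 : R ≤ (y + 1) / 2 := Nat.floor_le (by positivity)
    have hR2 : (y + 1) / 2 - 1 < R := Nat.sub_one_lt_floor _
    set δ := R - y / 2 with hδ_def
    have hδ_le : δ ≤ 1 / 2 := by linarith
    have hδ_ge : -1 / 2 ≤ δ := by linarith
    have hδ : δ ^ 2 ≤ 1 / 4 := by nlinarith
    have hδ3 : δ ^ 3 ≤ 1 / 8 := by
      nlinarith [mul_nonneg (sub_nonneg.mpr hδ_le) (sq_nonneg (δ + 1 / 4))]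
    have hexpand : R * (m + 1) - (4 * R ^ 3 - R) / 3
        = y ^ 3 / 3 - 2 * y * δ ^ 2 - 4 * δ ^ 3 / 3 + 4 * R / 3 := by
      rw [← hym]; ring
    rw [hexpand]
    nlinarith

theorem rpow_three_halves_div_four_le_sum_eDist2 (S : Finset (ℤ × ℤ)) {p : ℤ × ℤ} (hp : p ∈ S) :
    ((#S : ℝ) - 1) ^ ((3 : ℝ) / 2) / 4 ≤ ∑ q ∈ S, eDist2 p q := by
  have hS : (1 : ℝ) ≤ #S := by exact_mod_cast card_pos.mpr ⟨p, hp⟩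
  obtain ⟨R, hR⟩ := exists_rpow_three_halves_div_four_le (#S - 1) (by linarith)
  calc ((#S : ℝ) - 1) ^ ((3 : ℝ) / 2) / 4 ≤ R * (#S : ℝ) - (4 * R ^ 3 - R) / 3 := by
        simpa using hR
    _ ≤ ∑ q ∈ S, (chebDist p q : ℝ) := mul_card_sub_le_sum_chebDist S p R
    _ ≤ ∑ q ∈ S, eDist2 p q := sum_le_sum fun q _ => chebDist_le_eDist2 p q

theorem rpow_three_halves_div_four_le_sum_eDist2_comp {V : Type*} {g : V → ℤ × ℤ}
    (hg : Injective g) (S : Finset V) {u : V} (hu : u ∈ S) :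
    ((#S : ℝ) - 1) ^ ((3 : ℝ) / 2) / 4 ≤ ∑ v ∈ S, eDist2 (g u) (g v) := by
  rw [← card_image_of_injective S hg, ← sum_image fun x _ y _ h => hg h]
  exact rpow_three_halves_div_four_le_sum_eDist2 _ (mem_image_of_mem g hu)

end Spreading

section EdgeWeight

variable {V : Type*} [DecidableEq V]

def edgeWeight (a b u v : V) : ℝ := if s(u, v) = s(a, b) then 1 else 0

lemma edgeWeight_comm (a b u v : V) : edgeWeight a b u v = edgeWeight a b v u := by
  simp only [edgeWeight, Sym2.eq_swap]

lemma edgeWeight_nonneg (a b u v : V) : 0 ≤ edgeWeight a b u v := by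
  unfold edgeWeight; split_ifs <;> norm_num

lemma edgeWeight_self {a b : V} (hab : a ≠ b) (v : V) : edgeWeight a b v v = 0 := by
  rw [edgeWeight, if_neg]
  intro h
  exact hab (Sym2.mk_isDiag_iff.mp (h ▸ Sym2.mk_isDiag_iff.mpr rfl))

lemma half_sum_sum_edgeWeight_mul [Fintype V] {a b : V} (hab : a ≠ b) (X : V → V → ℝ)
    (hX : ∀ u v, X u v = X v u) : (∑ u, ∑ v, edgeWeight a b u v * X u v) / 2 = X a b := by
  have hw : ∀ u v, ¬(u = a ∧ v = b ∨ u = b ∧ v = a) → edgeWeight a b u v * X u v = 0 :=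
    fun u v h => by rw [edgeWeight, if_neg (Sym2.eq_iff.not.mpr h), zero_mul]
  rw [Fintype.sum_eq_add a b hab, Fintype.sum_eq_single b, Fintype.sum_eq_single a]
  · simp [edgeWeight, Sym2.eq_swap, hX b a]
  · exact fun v hv => hw b v (by tauto)
  · exact fun v hv => hw a v (by tauto)
  · exact fun u hu => sum_eq_zero fun v _ => hw u v (by tauto)

end EdgeWeight

noncomputable section Grid

def grid (s : ℕ) : Finset (ℤ × ℤ) := Ico 0 (s : ℤ) ×ˢ Ico 0 (s : ℤ)

lemma mem_grid {s : ℕ} {p : ℤ × ℤ} : p ∈ grid s ↔ 0 ≤ p.1 ∧ p.1 < s ∧ 0 ≤ p.2 ∧ p.2 < s := by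
  simp only [grid, mem_product, mem_Ico, and_assoc]

lemma card_grid (s : ℕ) : #(grid s) = s ^ 2 := by
  simp [grid, sq]

variable {s : ℕ} [NeZero s]

variable (s) in
def gridOrigin : grid s := ⟨(0, 0), mem_grid.mpr (by have := NeZero.pos s; omega)⟩

variable (s) in
def gridCorner : grid s :=
  ⟨((s : ℤ) - 1, (s : ℤ) - 1), mem_grid.mpr (by have := NeZero.pos s; omega)⟩

lemma gridOrigin_ne_gridCorner (hs : 2 ≤ s) : gridOrigin s ≠ gridCorner s := by
  simp only [gridOrigin, gridCorner, ne_eq, Subtype.mk.injEq, Prod.mk.injEq]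
  omega

variable (s) in
def terminals : Finset (grid s) := univ \ {gridOrigin s, gridCorner s}

lemma mem_terminals {v : grid s} :
    v ∈ terminals s ↔ (v : ℤ × ℤ) ≠ (0, 0) ∧ (v : ℤ × ℤ) ≠ ((s : ℤ) - 1, (s : ℤ) - 1) := by
  simp [terminals, gridOrigin, gridCorner, ← Subtype.val_inj]

lemma card_terminals (hs : 2 ≤ s) : #(terminals s) = s ^ 2 - 2 := by
  rw [terminals, card_sdiff_of_subset (subset_univ _), card_univ, Fintype.card_coe, card_grid,
    card_pair (gridOrigin_ne_gridCorner hs)]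

variable (s) in
lemma range_val_terminals :
    Set.range (fun x : terminals s => (x.1 : ℤ × ℤ)) = cornerFreeGrid s := by
  ext p
  constructor
  · rintro ⟨⟨v, hv⟩, rfl⟩
    exact ⟨mem_grid.mp v.2, mem_terminals.mp hv⟩
  · rintro ⟨hp, hne⟩
    exact ⟨⟨⟨p, mem_grid.mpr hp⟩, mem_terminals.mpr hne⟩, rfl⟩

def lpLayout (v : grid s) : ℤ × ℤ := if v = gridOrigin s then ((s : ℤ), (s : ℤ) - 1) else v

lemma lpLayout_of_mem_terminals {v : grid s} (hv : v ∈ terminals s) : lpLayout v = v := by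
  rw [lpLayout, if_neg]
  rintro rfl
  simp [mem_terminals, gridOrigin] at hv

lemma lpLayout_injective : Injective (lpLayout (s := s)) := by
  have hout : ∀ v : grid s, (v : ℤ × ℤ) ≠ ((s : ℤ), (s : ℤ) - 1) := fun v h => by
    have := (mem_grid.mp v.2).2.1
    rw [h] at this
    exact lt_irrefl _ this
  intro u v huv
  unfold lpLayout at huv
  split_ifs at huv with hu hv hv
  · exact hu.trans hv.symm
  · exact absurd huv.symm (hout v)
  · exact absurd huv (hout u)
  · exact Subtype.val_injective huv

lemma eDist2_lpLayout_gridOrigin_gridCorner (hs : 2 ≤ s) :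
    eDist2 (lpLayout (gridOrigin s)) (lpLayout (gridCorner s)) = 1 := by
  rw [lpLayout, lpLayout, if_pos rfl, if_neg (gridOrigin_ne_gridCorner hs).symm]
  simp [eDist2, gridCorner]

lemma eDist2_zero_corner : eDist2 (0, 0) ((s : ℤ) - 1, (s : ℤ) - 1) = √2 * (s - 1) := by
  have hs : (1 : ℝ) ≤ s := by exact_mod_cast NeZero.one_le
  rw [eDist2, show ∀ x : ℝ, x ^ 2 + x ^ 2 = 2 * x ^ 2 by intro x; ring]
  push_cast
  rw [Real.sqrt_mul zero_le_two, Real.sqrt_sq_eq_abs, zero_sub, abs_neg,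
    abs_of_nonneg (by linarith)]

lemma eDist2_gridOrigin_gridCorner_of_injective (hs : 2 ≤ s) {f : grid s → ℤ × ℤ}
    (hf : Injective f) (hgrid : ∀ v, f v ∈ grid s) (hfix : ∀ t ∈ terminals s, f t = t) :
    eDist2 (f (gridOrigin s)) (f (gridCorner s)) = √2 * (s - 1) := by
  have hcorner : ∀ v ∉ terminals s, f v = (0, 0) ∨ f v = ((s : ℤ) - 1, (s : ℤ) - 1) := by
    intro v hv
    by_contra hoff
    rw [not_or, ← ne_eq, ← ne_eq] at hoff
    obtain ⟨t, ht⟩ : f v ∈ Set.range (fun x : terminals s => (x.1 : ℤ × ℤ)) :=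
      range_val_terminals s ▸ ⟨mem_grid.mp (hgrid v), hoff⟩
    exact hv (hf ((hfix t t.2).trans ht) ▸ t.2)
  have hne : f (gridOrigin s) ≠ f (gridCorner s) := hf.ne (gridOrigin_ne_gridCorner hs)
  have hfree : ∀ v : grid s, v ∉ terminals s ↔ v = gridOrigin s ∨ v = gridCorner s := by
    simp only [terminals, mem_sdiff, mem_univ, true_and, mem_insert, mem_singleton, not_not,
      implies_true]
  rcases hcorner _ ((hfree _).mpr (.inl rfl)) with h₁ | h₁ <;>
    rcases hcorner _ ((hfree _).mpr (.inr rfl)) with h₂ | h₂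
  · exact absurd (h₁.trans h₂.symm) hne
  · rw [h₁, h₂, eDist2_zero_corner]
  · rw [h₁, h₂, eDist2_comm, eDist2_zero_corner]
  · exact absurd (h₁.trans h₂.symm) hne

end Grid

theorem bounded_2dimap_plus_integrality_gap (s : ℕ) (hs : 2 ≤ s) :
    ∃ (V : Type) (i1 : Fintype V) (i2 : DecidableEq V),
      @BoundedGapInstance s V i1 i2 := by
  have : NeZero s := ⟨by omega⟩
  have hab := gridOrigin_ne_gridCorner hs
  have hcost := fun f : grid s → ℤ × ℤ =>
    half_sum_sum_edgeWeight_mul hab (fun u v => eDist2 (f u) (f v)) fun u v => eDist2_comm _ _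
  refine ⟨grid s, inferInstance, inferInstance, by rw [Fintype.card_coe, card_grid],
    terminals s, fun x => x.1, edgeWeight (gridOrigin s) (gridCorner s),
    fun u v => eDist2 (lpLayout u) (lpLayout v), card_terminals hs,
    Subtype.val_injective.comp Subtype.val_injective,
    fun x => (range_val_terminals s).subset ⟨x, rfl⟩,
    fun _ hp => (range_val_terminals s).superset hp,
    edgeWeight_comm _ _, edgeWeight_nonneg _ _, edgeWeight_self hab,
    isMetric_eDist2_comp lpLayout_injective,
    fun x y => congrArg₂ eDist2 (lpLayout_of_mem_terminals x.2) (lpLayout_of_mem_terminals y.2),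
    fun S u hu => rpow_three_halves_div_four_le_sum_eDist2_comp lpLayout_injective S hu,
    by rw [hcost, eDist2_lpLayout_gridOrigin_gridCorner hs], fun f hf hgrid hfix => ?_⟩
  rw [hcost]
  exact eDist2_gridOrigin_gridCorner_of_injective hs hf (fun v => mem_grid.mpr (hgrid v)) hfix
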